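/- Let w be a rich word over an alphabet with q > 1 letters such that F(w,n+1) is closed under reversal, |w| ≥ n+1, and n > 0. Then |F(w,n)| ≤ 2(n−1)·(q+1)·n·(4·q¹⁰·n)^{log₂ n} − 2(n−1) + q. -/

import Mathlib

/-!
In a rich word every prefix `w[0, e)` ends with a palindrome that does not occur earlier: its
longest palindromic suffix. Send a factor `u` of length `m` to the new palindrome `p` at the end
of its first occurrence; this is injective. If `|p| ≤ m`, `u` is counted by the palindromic
factors of length at most `m`; otherwise `u` is a suffix of `p`, so `uᴿ` is a prefix of `p` and
occurs earlier, which happens for at most half of the factors. Hence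
`|F(w,m)| ≤ 2 ∑_{k ≤ m} |F_p(w,k)|`, and a palindrome is determined by its first half, so
`|F(w,m)| ≤ 2m · max_{i ≤ ⌈m/2⌉} |F(w,i)|`. Iterating gives `|F(w,n)| ≤ q (2n)^⌈log₂ n⌉`, which is
below the stated bound.
-/

namespace RichWords

/-- A word over the alphabet `A`: either finite or infinite. -/
inductive Word (A : Type*) where
  | fin : List A → Word A
  | inf : (ℕ → A) → Word A

/-- `w.Factor u` : the finite word `u` is a factor of the word `w`. -/
def Word.Factor {A : Type*} : Word A → List A → Prop
  | .fin v, u => u <:+: v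
  | .inf f, u => ∃ i : ℕ, u = List.ofFn (fun j : Fin u.length => f (i + (j : ℕ)))

/-- `F w n` : the set of factors of length `n` of the word `w`. -/
def F {A : Type*} (w : Word A) (n : ℕ) : Set (List A) :=
  {u | w.Factor u ∧ u.length = n}

/-- `Fp w n` : the set of palindromic factors of length `n` of the word `w`. -/
def Fp {A : Type*} (w : Word A) (n : ℕ) : Set (List A) :=
  {u | u ∈ F w n ∧ u.reverse = u}

/-- A finite word of length `m` is rich if it contains `m + 1` distinct palindromic
factors (the empty word included). -/
def RichList {A : Type*} (v : List A) : Prop :=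
  {u | u <:+: v ∧ u.reverse = u}.ncard = v.length + 1

/-- A word (finite or infinite) is rich: a finite word is rich as above, and an
infinite word is rich if every finite factor of it is rich. -/
def Word.Rich {A : Type*} : Word A → Prop
  | .fin v => RichList v
  | .inf f => ∀ u : List A, (Word.inf f).Factor u → RichList u

/-- `gamma w n` : the set of `u`-switches of length `n` of `w`, i.e. factors of the
form `a u b` with `a ≠ b` letters and `u` a palindrome; empty for `n ≤ 2`. -/
def gamma {A : Type*} (w : Word A) (n : ℕ) : Set (List A) :=
  {v | 2 < n ∧ v ∈ F w n ∧
    ∃ (a b : A) (u : List A), a ≠ b ∧ v = a :: (u ++ [b]) ∧ u.reverse = u}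

/-- `gammaBar w n` : the set of pairs `(u, c)` such that `a u b ∈ gamma w n`
for some letters `a ≠ b` with `c ∈ {a, b}`. -/
def gammaBar {A : Type*} (w : Word A) (n : ℕ) : Set (List A × A) :=
  {p | ∃ a b : A, a ≠ b ∧ (a :: (p.1 ++ [b])) ∈ gamma w n ∧ (p.2 = a ∨ p.2 = b)}

/-- `Gam w n = max {1, max {|gamma w i| : 0 ≤ i ≤ n}}`. -/
noncomputable def Gam {A : Type*} (w : Word A) (n : ℕ) : ℕ :=
  max 1 ((Finset.range (n + 1)).sup fun i => (gamma w i).ncard)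

/-- `trim v` removes the first and the last letter of `v`. -/
def trim {A : Type*} (v : List A) : List A := (v.drop 1).dropLast

/-- `IsLpps u r` : `r` is the longest proper palindromic suffix of `u`
(for `|u| ≤ 1` it is the empty word). -/
def IsLpps {A : Type*} (u r : List A) : Prop :=
  if u.length ≤ 1 then r = []
  else r <:+ u ∧ r.reverse = r ∧ r ≠ u ∧
    ∀ s : List A, s <:+ u → s.reverse = s → s ≠ u → s.length ≤ r.length

section Development

open List

variable {A : Type*}

theorem finite_setOf_infix (w : List A) : {u | u <:+: w}.Finite :=
  w.sublists.finite_toSet.subset fun _ hu => mem_sublists.mpr hu.sublist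

def palFactors (v : List A) : Set (List A) :=
  {u | u <:+: v ∧ u.reverse = u}

theorem richList_iff {v : List A} : RichList v ↔ (palFactors v).ncard = v.length + 1 :=
  Iff.rfl

theorem palFactors_finite (v : List A) : (palFactors v).Finite :=
  (finite_setOf_infix v).subset fun _ hu => hu.1

theorem palFactors_nil : palFactors ([] : List A) = {[]} := by
  ext u
  simp +contextual [palFactors, infix_nil]

open scoped Classical in
noncomputable def longestPalSuffix (v : List A) : List A :=
  v.rtake (Nat.findGreatest (fun k => (v.rtake k).reverse = v.rtake k) v.length)

theorem longestPalSuffix_suffix (v : List A) : longestPalSuffix v <:+ v :=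
  drop_suffix _ _

theorem longestPalSuffix_reverse (v : List A) :
    (longestPalSuffix v).reverse = longestPalSuffix v := by
  classical
  exact Nat.findGreatest_spec (P := fun k => (v.rtake k).reverse = v.rtake k) (Nat.zero_le _)
    (by simp [rtake_zero])

theorem length_le_length_longestPalSuffix {u v : List A} (hu : u <:+ v) (hpal : u.reverse = u) :
    u.length ≤ (longestPalSuffix v).length := by
  classical
  have hu' : u = v.rtake u.length := suffix_iff_eq_drop.mp hu
  have hle := Nat.le_findGreatest (P := fun k => (v.rtake k).reverse = v.rtake k)
    hu.length_le (by rwa [← hu'])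
  have := Nat.findGreatest_le (P := fun k => (v.rtake k).reverse = v.rtake k) v.length
  rw [longestPalSuffix, rtake, length_drop]
  omega

theorem longestPalSuffix_ne_nil {v : List A} (hv : v ≠ []) : longestPalSuffix v ≠ [] := by
  rw [← length_pos_iff]
  exact length_le_length_longestPalSuffix (u := [v.getLast hv])
    ⟨v.dropLast, dropLast_append_getLast hv⟩ rfl

theorem palFactors_append_singleton_subset (v : List A) (a : A) :
    palFactors (v ++ [a]) ⊆ insert (longestPalSuffix (v ++ [a])) (palFactors v) := by
  rintro u ⟨hu, hpal⟩
  rcases infix_concat_iff.mp hu with hsuf | hinf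
  · have hr := longestPalSuffix_suffix (v ++ [a])
    have hrpal := longestPalSuffix_reverse (v ++ [a])
    have hrne : longestPalSuffix (v ++ [a]) ≠ [] := longestPalSuffix_ne_nil (by simp)
    obtain heq | hlt := (length_le_length_longestPalSuffix hsuf hpal).eq_or_lt
    · exact Or.inl ((suffix_of_suffix_length_le hsuf hr heq.le).eq_of_length heq)
    generalize longestPalSuffix (v ++ [a]) = r at *
    -- a shorter palindromic suffix is also a prefix of `r`, so it already occurs in `r.dropLast`
    have hpre : u <+: r := by
      rw [← reverse_suffix, hpal, hrpal]
      exact suffix_of_suffix_length_le hsuf hr hlt.le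
    have hdrop : r.dropLast <:+ v := by
      rcases suffix_concat_iff.mp hr with hnil | ⟨t, rfl, ht⟩
      · exact absurd hnil hrne
      · rwa [dropLast_concat]
    have hpre' : u <+: r.dropLast :=
      prefix_of_prefix_length_le hpre (dropLast_prefix r) (by rw [length_dropLast]; omega)
    exact Or.inr ⟨hpre'.isInfix.trans hdrop.isInfix, hpal⟩
  · exact Or.inr ⟨hinf, hpal⟩

theorem ncard_palFactors_append_le (v t : List A) :
    (palFactors (v ++ t)).ncard ≤ (palFactors v).ncard + t.length := by
  induction t using reverseRecOn with
  | nil => simp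
  | append_singleton t a ih =>
    rw [← append_assoc, length_append, length_singleton]
    calc (palFactors (v ++ t ++ [a])).ncard
        ≤ (insert (longestPalSuffix (v ++ t ++ [a])) (palFactors (v ++ t))).ncard :=
          Set.ncard_le_ncard (palFactors_append_singleton_subset _ _)
            ((palFactors_finite _).insert _)
      _ ≤ (palFactors (v ++ t)).ncard + 1 := Set.ncard_insert_le _ _
      _ ≤ (palFactors v).ncard + t.length + 1 := by omega

theorem ncard_palFactors_le (v : List A) : (palFactors v).ncard ≤ v.length + 1 := by
  simpa [palFactors_nil, add_comm] using ncard_palFactors_append_le [] v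

theorem RichList.of_prefix {v w : List A} (hw : RichList w) (hv : v <+: w) : RichList v := by
  obtain ⟨t, rfl⟩ := hv
  have := ncard_palFactors_append_le v t
  have := ncard_palFactors_le v
  rw [richList_iff, length_append] at *
  omega

theorem RichList.longestPalSuffix_not_infix {v : List A} {a : A} (h : RichList (v ++ [a])) :
    ¬ longestPalSuffix (v ++ [a]) <:+: v := by
  intro hinf
  have hsub : palFactors (v ++ [a]) ⊆ palFactors v := fun u hu =>
    (palFactors_append_singleton_subset v a hu).elim
      (fun heq => heq ▸ ⟨hinf, longestPalSuffix_reverse _⟩) id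
  have := Set.ncard_le_ncard hsub (palFactors_finite v)
  have := ncard_palFactors_le v
  rw [richList_iff.mp h, length_append, length_singleton] at *
  omega

theorem RichList.longestPalSuffix_take_not_infix {w : List A} (hw : RichList w) {e : ℕ}
    (he : e < w.length) : ¬ longestPalSuffix (w.take (e + 1)) <:+: w.take e := by
  have hsplit := take_concat_get' w e he
  rw [← hsplit]
  exact (hw.of_prefix (hsplit ▸ take_prefix _ _)).longestPalSuffix_not_infix

theorem RichList.injOn_longestPalSuffix_take {w : List A} (hw : RichList w) :
    Set.InjOn (fun e => longestPalSuffix (w.take e)) (Set.Iic w.length) := by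
  have hne : ∀ e₁ e₂, e₁ < e₂ → e₂ ≤ w.length →
      longestPalSuffix (w.take e₁) ≠ longestPalSuffix (w.take e₂) := by
    intro e₁ e₂ hlt hle heq
    obtain ⟨e, rfl⟩ : ∃ e, e₂ = e + 1 := ⟨e₂ - 1, by omega⟩
    apply hw.longestPalSuffix_take_not_infix (by omega : e < w.length)
    rw [← heq]
    exact (longestPalSuffix_suffix _).isInfix.trans (take_prefix_take_left (by omega)).isInfix
  intro e₁ h₁ e₂ h₂ heq
  rcases lt_trichotomy e₁ e₂ with hlt | rfl | hgt
  · exact absurd heq (hne _ _ hlt h₂)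
  · rfl
  · exact absurd heq.symm (hne _ _ hgt h₁)

noncomputable def firstEnd (w u : List A) : ℕ :=
  sInf {e | u <:+ w.take e}

section FirstEnd

variable {u w : List A}

theorem exists_suffix_take_of_infix (h : u <:+: w) : ∃ e ≤ w.length, u <:+ w.take e := by
  obtain ⟨t, hut, htw⟩ := infix_iff_suffix_prefix.mp h
  exact ⟨t.length, htw.length_le, prefix_iff_eq_take.mp htw ▸ hut⟩

theorem suffix_take_firstEnd (h : u <:+: w) : u <:+ w.take (firstEnd w u) :=
  let ⟨e, _, he⟩ := exists_suffix_take_of_infix h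
  Nat.sInf_mem (s := {e | u <:+ w.take e}) ⟨e, he⟩

theorem firstEnd_le {e : ℕ} (h : u <:+ w.take e) : firstEnd w u ≤ e :=
  Nat.sInf_le h

theorem firstEnd_le_length (h : u <:+: w) : firstEnd w u ≤ w.length :=
  let ⟨_, he, hsuf⟩ := exists_suffix_take_of_infix h
  (firstEnd_le hsuf).trans he

theorem length_le_firstEnd (h : u <:+: w) : u.length ≤ firstEnd w u :=
  (suffix_take_firstEnd h).length_le.trans (length_take_le _ _)

end FirstEnd

theorem exists_reverse_suffix_take_lt {u v : List A} (hu : u <:+ v)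
    (hlt : u.length < (longestPalSuffix v).length) : ∃ e < v.length, u.reverse <:+ v.take e := by
  have hr := longestPalSuffix_suffix v
  have hpre : u.reverse <+: longestPalSuffix v := by
    rw [← reverse_suffix, reverse_reverse, longestPalSuffix_reverse]
    exact suffix_of_suffix_length_le hu hr hlt.le
  obtain ⟨y, hy⟩ := hpre
  obtain ⟨b, hb⟩ := hr
  refine ⟨b.length + u.length, ?_, ?_⟩
  · have := congrArg length hb
    have := congrArg length hy
    simp only [length_append, length_reverse] at *
    omega
  · rw [← hb, ← hy, ← append_assoc, take_left' (by simp)]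
    exact suffix_append b _

/-- The palindrome that is new at the end of the first occurrence of `u` in `w`. -/
noncomputable def firstEndPal (w u : List A) : List A :=
  longestPalSuffix (w.take (firstEnd w u))

theorem firstEnd_reverse_lt {u w : List A} (hu : u <:+: w)
    (hlt : u.length < (firstEndPal w u).length) :
    u.reverse <:+: w ∧ firstEnd w u.reverse < firstEnd w u := by
  obtain ⟨e, he, hsuf⟩ := exists_reverse_suffix_take_lt (suffix_take_firstEnd hu) hlt
  rw [take_take] at hsuf
  refine ⟨hsuf.isInfix.trans (take_prefix _ _).isInfix, (firstEnd_le hsuf).trans_lt ?_⟩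
  have := length_take_le (firstEnd w u) w
  omega

theorem F_finite (w : List A) (m : ℕ) : (F (.fin w) m).Finite :=
  (finite_setOf_infix w).subset fun _ hu => hu.1

theorem Fp_finite (w : List A) (m : ℕ) : (Fp (.fin w) m).Finite :=
  (F_finite w m).subset fun _ hu => hu.1

theorem RichList.injOn_firstEndPal {w : List A} (hw : RichList w) (m : ℕ) :
    Set.InjOn (firstEndPal w) (F (.fin w) m) := by
  rintro u ⟨hu, rfl⟩ v ⟨hv, hlen⟩ heq
  have he : firstEnd w u = firstEnd w v :=
    hw.injOn_longestPalSuffix_take (firstEnd_le_length hu) (firstEnd_le_length hv) heq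
  have hsu := suffix_take_firstEnd hu
  rw [he] at hsu
  exact (suffix_of_suffix_length_le hsu (suffix_take_firstEnd hv) hlen.ge).eq_of_length hlen.symm

theorem ncard_le_two_mul_ncard_diff {α : Type*} {s t : Set α} (hs : s.Finite) (hts : t ⊆ s)
    {f : α → α} (hf : Set.InjOn f t) (hmaps : Set.MapsTo f t (s \ t)) :
    s.ncard ≤ 2 * (s \ t).ncard := by
  have := Set.ncard_le_ncard_of_injOn f hmaps hf hs.sdiff
  have := Set.ncard_sdiff_add_ncard_of_subset hts hs
  omega

theorem ncard_F_le_two_mul_sum_ncard_Fp {w : List A} (hw : RichList w) {m : ℕ} (hm : 0 < m) :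
    (F (.fin w) m).ncard ≤ 2 * ∑ k ∈ Finset.Icc 1 m, (Fp (.fin w) k).ncard := by
  set B := {u ∈ F (.fin w) m | m < (firstEndPal w u).length}
  -- each factor in `B` has a reversal occurring earlier, which is then not in `B`
  have hrev : Set.MapsTo reverse B (F (.fin w) m \ B) := by
    rintro u ⟨⟨hu, rfl⟩, hlt⟩
    obtain ⟨hrev, hlt'⟩ := firstEnd_reverse_lt hu hlt
    refine ⟨⟨hrev, length_reverse⟩, fun ⟨_, hlt''⟩ => ?_⟩
    have := (firstEnd_reverse_lt hrev (by simpa using hlt'')).2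
    rw [reverse_reverse] at this
    omega
  have hpal : Set.MapsTo (firstEndPal w) (F (.fin w) m \ B)
      (⋃ k ∈ Finset.Icc 1 m, Fp (.fin w) k) := by
    rintro u ⟨⟨hu, rfl⟩, hshort⟩
    have hne : w.take (firstEnd w u) ≠ [] := by
      have := length_le_firstEnd hu
      have := firstEnd_le_length hu
      rw [ne_eq, ← length_eq_zero_iff, length_take]
      omega
    simp only [Set.mem_iUnion, Finset.mem_Icc]
    refine ⟨(firstEndPal w u).length, ⟨length_pos_iff.mpr (longestPalSuffix_ne_nil hne), ?_⟩,
      ⟨(longestPalSuffix_suffix _).isInfix.trans (take_prefix _ _).isInfix, rfl⟩,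
      longestPalSuffix_reverse _⟩
    by_contra hlong
    exact hshort ⟨⟨hu, rfl⟩, by omega⟩
  have hfin : (⋃ k ∈ Finset.Icc 1 m, Fp (.fin w) k).Finite :=
    Set.Finite.biUnion (Finset.finite_toSet _) fun k _ => Fp_finite w k
  calc (F (.fin w) m).ncard
      ≤ 2 * (F (.fin w) m \ B).ncard :=
        ncard_le_two_mul_ncard_diff (F_finite w m) (Set.sep_subset _ _) reverse_injective.injOn hrev
    _ ≤ 2 * ∑ k ∈ Finset.Icc 1 m, (Fp (.fin w) k).ncard := by
        gcongr
        exact (Set.ncard_le_ncard_of_injOn _ hpal ((hw.injOn_firstEndPal m).mono Set.sdiff_subset)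
          hfin).trans (Finset.set_ncard_biUnion_le _ _)

theorem eq_take_append_reverse_of_reverse_eq {x : List A} (hx : x.reverse = x) :
    x = x.take ((x.length + 1) / 2)
      ++ ((x.take ((x.length + 1) / 2)).take (x.length / 2)).reverse := by
  conv_lhs => rw [← take_append_drop ((x.length + 1) / 2) x]
  rw [take_take, min_eq_left (by omega), reverse_take, hx,
    show x.length - x.length / 2 = (x.length + 1) / 2 by omega]

theorem ncard_Fp_le_ncard_F_half (w : List A) (k : ℕ) :
    (Fp (.fin w) k).ncard ≤ (F (.fin w) ((k + 1) / 2)).ncard := by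
  refine Set.ncard_le_ncard_of_injOn (take ((k + 1) / 2)) ?_ ?_ (F_finite w _)
  · rintro u ⟨⟨hu, rfl⟩, -⟩
    exact ⟨(take_prefix _ u).isInfix.trans hu, by rw [length_take]; omega⟩
  · rintro u ⟨⟨-, rfl⟩, hu⟩ v ⟨⟨-, hlen⟩, hv⟩ heq
    rw [eq_take_append_reverse_of_reverse_eq hu, eq_take_append_reverse_of_reverse_eq hv, hlen,
      heq]

theorem ncard_F_one_le [Fintype A] (w : List A) : (F (.fin w) 1).ncard ≤ Fintype.card A := by
  calc (F (.fin w) 1).ncard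
      ≤ ((fun a : A => [a]) '' Set.univ).ncard := by
        refine Set.ncard_le_ncard (fun u hu => ?_) (Set.finite_univ.image _)
        obtain ⟨a, rfl⟩ := length_eq_one_iff.mp hu.2
        exact ⟨a, trivial, rfl⟩
    _ ≤ Fintype.card A := by
        rw [← Nat.card_eq_fintype_card, ← Set.ncard_univ]
        exact Set.ncard_image_le Set.finite_univ

noncomputable def maxComplexity (w : List A) (m : ℕ) : ℕ :=
  (Finset.Icc 1 m).sup fun i => (F (.fin w) i).ncard

theorem ncard_F_le_maxComplexity (w : List A) {i m : ℕ} (hi : 0 < i) (him : i ≤ m) :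
    (F (.fin w) i).ncard ≤ maxComplexity w m :=
  Finset.le_sup (f := fun i => (F (.fin w) i).ncard) (Finset.mem_Icc.mpr ⟨hi, him⟩)

theorem maxComplexity_one_le [Fintype A] (w : List A) : maxComplexity w 1 ≤ Fintype.card A := by
  simpa [maxComplexity] using ncard_F_one_le w

theorem RichList.maxComplexity_le {w : List A} (hw : RichList w) (m : ℕ) :
    maxComplexity w m ≤ 2 * m * maxComplexity w ((m + 1) / 2) := by
  refine Finset.sup_le fun i hi => ?_
  rw [Finset.mem_Icc] at hi
  calc (F (.fin w) i).ncard
      ≤ 2 * ∑ k ∈ Finset.Icc 1 i, (Fp (.fin w) k).ncard := ncard_F_le_two_mul_sum_ncard_Fp hw hi.1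
    _ ≤ 2 * ∑ k ∈ Finset.Icc 1 i, maxComplexity w ((m + 1) / 2) := by
        gcongr with k hk
        rw [Finset.mem_Icc] at hk
        exact (ncard_Fp_le_ncard_F_half w k).trans
          (ncard_F_le_maxComplexity w (by omega) (by omega))
    _ ≤ 2 * m * maxComplexity w ((m + 1) / 2) := by
        rw [Finset.sum_const, Nat.card_Icc, smul_eq_mul, Nat.add_sub_cancel, mul_assoc]
        gcongr
        exact hi.2

theorem le_mul_pow_clog_of_le_two_mul {f : ℕ → ℕ} {c : ℕ} (h₁ : f 1 ≤ c)
    (hrec : ∀ m, 2 ≤ m → f m ≤ 2 * m * f ((m + 1) / 2)) {m : ℕ} (hm : 0 < m) :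
    f m ≤ c * (2 * m) ^ Nat.clog 2 m := by
  induction m using Nat.strong_induction_on with
  | _ m ih =>
    obtain rfl | hm2 := (Nat.one_le_iff_ne_zero.mpr hm.ne').eq_or_lt
    · simpa using h₁
    calc f m ≤ 2 * m * f ((m + 1) / 2) := hrec m hm2
      _ ≤ 2 * m * (c * (2 * ((m + 1) / 2)) ^ Nat.clog 2 ((m + 1) / 2)) := by
          gcongr
          exact ih _ (by omega) (by omega)
      _ ≤ 2 * m * (c * (2 * m) ^ Nat.clog 2 ((m + 1) / 2)) := by
          gcongr
          omega
      _ = c * (2 * m) ^ Nat.clog 2 m := by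
          rw [Nat.clog_of_two_le one_lt_two hm2, show m + 2 - 1 = m + 1 by omega]
          ring

theorem RichList.ncard_F_le [Fintype A] {w : List A} (hw : RichList w) {n : ℕ} (hn : 0 < n) :
    (F (.fin w) n).ncard ≤ Fintype.card A * (2 * n) ^ Nat.clog 2 n :=
  (ncard_F_le_maxComplexity w hn le_rfl).trans
    (le_mul_pow_clog_of_le_two_mul (maxComplexity_one_le w) (fun m _ => hw.maxComplexity_le m) hn)

theorem natClog_le_logb_add_one {n : ℕ} (hn : 0 < n) : (Nat.clog 2 n : ℝ) ≤ Real.logb 2 n + 1 := by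
  have hceil := Real.natCeil_logb_natCast 2 n
  push_cast at hceil
  rw [← hceil]
  exact (Nat.ceil_lt_add_one (Real.logb_nonneg one_lt_two (Nat.one_le_cast.mpr hn))).le

theorem pow_clog_le_mul_rpow_logb {n : ℕ} (hn : 0 < n) :
    (2 * n : ℝ) ^ Nat.clog 2 n ≤ 2 * n * (2 * n : ℝ) ^ Real.logb 2 n := by
  have h2n : (1 : ℝ) ≤ 2 * n := by
    have : (1 : ℝ) ≤ n := Nat.one_le_cast.mpr hn
    linarith
  rw [← Real.rpow_natCast]
  calc (2 * n : ℝ) ^ (Nat.clog 2 n : ℝ)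
      ≤ (2 * n : ℝ) ^ (Real.logb 2 n + 1) :=
        Real.rpow_le_rpow_of_exponent_le h2n (natClog_le_logb_add_one hn)
    _ = 2 * n * (2 * n : ℝ) ^ Real.logb 2 n := by
        rw [Real.rpow_add (by positivity), Real.rpow_one, mul_comm]

theorem mul_pow_clog_le_closed_bound {q : ℝ} (hq : 1 ≤ q) {n : ℕ} (hn : 0 < n) :
    q * (2 * n : ℝ) ^ Nat.clog 2 n
      ≤ 2 * ((n : ℝ) - 1) * (q + 1) * n * (4 * q ^ 10 * n) ^ Real.logb 2 n
        - 2 * ((n : ℝ) - 1) + q := by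
  obtain rfl | hn2 := (Nat.one_le_iff_ne_zero.mpr hn.ne').eq_or_lt
  · simp
  have hn2' : (2 : ℝ) ≤ n := by exact_mod_cast hn2
  have hpow := pow_clog_le_mul_rpow_logb hn
  set L := Real.logb 2 n
  have hL : 1 ≤ L := by
    rw [← Real.logb_self_eq_one one_lt_two]
    exact Real.logb_le_logb_of_le one_lt_two two_pos hn2'
  set X := (2 * n : ℝ) ^ L
  have hX : 1 ≤ X := Real.one_le_rpow (by linarith) (by linarith)
  have hq10 : q ≤ q ^ 10 := le_self_pow₀ hq (by norm_num)
  have hY : 2 * q ^ 10 * X ≤ (4 * q ^ 10 * n) ^ L := by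
    rw [show 4 * q ^ 10 * n = 2 * q ^ 10 * (2 * n) by ring,
      Real.mul_rpow (by positivity) (by positivity)]
    gcongr
    calc 2 * q ^ 10 = (2 * q ^ 10) ^ (1 : ℝ) := (Real.rpow_one _).symm
      _ ≤ (2 * q ^ 10) ^ L := Real.rpow_le_rpow_of_exponent_le (by linarith) hL
  set Y := (4 * q ^ 10 * n) ^ L
  have hqX : 2 * q * X ≤ Y := by nlinarith
  have hY1 : 1 ≤ Y := by nlinarith
  have hnq : (1 : ℝ) ≤ ((n : ℝ) - 1) * (q + 1) := by nlinarith
  have h1 : 2 * q * n * X ≤ ((n : ℝ) - 1) * (q + 1) * n * Y :=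
    calc 2 * q * n * X = n * (2 * q * X) := by ring
      _ ≤ n * Y := by gcongr
      _ ≤ ((n : ℝ) - 1) * (q + 1) * (n * Y) := le_mul_of_one_le_left (by positivity) hnq
      _ = ((n : ℝ) - 1) * (q + 1) * n * Y := by ring
  have h2 : 2 * ((n : ℝ) - 1) ≤ ((n : ℝ) - 1) * (q + 1) * n * Y := by
    have : (2 : ℝ) ≤ (q + 1) * n * Y := by
      calc (2 : ℝ) ≤ 1 * 2 * 1 := by norm_num
        _ ≤ (q + 1) * n * Y := by gcongr; linarith
    nlinarith
  nlinarith

end Development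

theorem factor_complexity_closed_bound_general {A : Type*} [Fintype A] (hq : 1 < Fintype.card A)
    (w : List A) (hw : RichList w) (n : ℕ) (hn : 0 < n) :
    ((F (Word.fin w) n).ncard : ℝ)
      ≤ 2 * ((n : ℝ) - 1) * ((Fintype.card A : ℝ) + 1) * n
            * (4 * (Fintype.card A : ℝ) ^ 10 * n) ^ Real.logb 2 n
        - 2 * ((n : ℝ) - 1) + (Fintype.card A : ℝ) :=
  calc ((F (Word.fin w) n).ncard : ℝ)
      ≤ Fintype.card A * (2 * n : ℝ) ^ Nat.clog 2 n := by exact_mod_cast hw.ncard_F_le hn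
    _ ≤ _ := mul_pow_clog_le_closed_bound (by exact_mod_cast hq.le) hn

/-- If `w` is a rich word over an alphabet with `q > 1` letters with
`F(w, n+1)` closed under reversal, `|w| ≥ n + 1` and `n > 0`, then
`|F(w,n)| ≤ 2(n-1)(q+1) n (4 q¹⁰ n) ^ (log₂ n) - 2(n-1) + q`. -/
theorem factor_complexity_closed_bound {A : Type*} [Fintype A] (hq : 1 < Fintype.card A)
    (w : List A) (hw : RichList w) (n : ℕ) (hn : 0 < n) (hlen : n + 1 ≤ w.length)
    (hcl : ∀ u ∈ F (Word.fin w) (n + 1), u.reverse ∈ F (Word.fin w) (n + 1)) :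
    ((F (Word.fin w) n).ncard : ℝ)
      ≤ 2 * ((n : ℝ) - 1) * ((Fintype.card A : ℝ) + 1) * n
            * (4 * (Fintype.card A : ℝ) ^ 10 * n) ^ Real.logb 2 n
        - 2 * ((n : ℝ) - 1) + (Fintype.card A : ℝ) :=
  factor_complexity_closed_bound_general hq w hw n hn

end RichWords
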